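/- Let m = m(n) ∈ ℕ and p = p(n) ∈ (0,1) be arbitrary sequences, and let Ñ_E = (N_E − E[N_E])/√(Var[N_E]) be the standardised number of edges of G(n, m(n), p(n)). If Ñ_E converges in distribution to the standard normal distribution as n → ∞, then n² p̂(1−p̂) → ∞, where p̂ = p̂(n) = 1 − (1 − p(n)²)^{m(n)}. -/

import Mathlib

open Finset MeasureTheory ProbabilityTheory Filter Topology

namespace RIG

noncomputable section

/-- `{0,1}^m`, the space of attribute vectors. -/
abbrev V (m : ℕ) : Type := Fin m → Bool

/-- The `Bernoulli(p)^{⊗ m}` weight of `x ∈ {0,1}^m`, i.e. `μ_{m,p}({x})`. -/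
def bw (m : ℕ) (p : ℝ) (x : V m) : ℝ := ∏ i : Fin m, if x i then p else 1 - p

/-- The `μ_{m,p}^{⊗ k}` weight of a `k`-tuple of attribute vectors. -/
def bwk (m k : ℕ) (p : ℝ) (x : Fin k → V m) : ℝ := ∏ j : Fin k, bw m p (x j)

/-- Integral with respect to `μ_{m,p}^{⊗ k}`. -/
def intk (m k : ℕ) (p : ℝ) (F : (Fin k → V m) → ℝ) : ℝ :=
  ∑ x : Fin k → V m, bwk m k p x * F x

/-- Squared `L²(μ_{m,p}^{⊗ k})` norm. -/
def normSq (m k : ℕ) (p : ℝ) (F : (Fin k → V m) → ℝ) : ℝ :=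
  intk m k p fun x => F x ^ 2

/-- The underlying probability space of `G(n,m,p)`: each of the `n` vertices
chooses an attribute vector in `{0,1}^m`. -/
abbrev Om (n m : ℕ) : Type := Fin n → V m

/-- Probability weight of a sample point `ω`. -/
def Wt (n m : ℕ) (p : ℝ) (ω : Om n m) : ℝ := ∏ k : Fin n, bw m p (ω k)

/-- Expectation of a random variable on `Om n m`. -/
def EE (n m : ℕ) (p : ℝ) (F : Om n m → ℝ) : ℝ := ∑ ω : Om n m, Wt n m p ω * F ω

/-- Variance of a random variable on `Om n m`. -/
def VarE (n m : ℕ) (p : ℝ) (F : Om n m → ℝ) : ℝ :=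
  EE n m p fun ω => (F ω - EE n m p F) ^ 2

/-- Probability of an event. -/
def Pr (n m : ℕ) (p : ℝ) (s : Set (Om n m)) : ℝ :=
  ∑ ω : Om n m, Set.indicator s (Wt n m p) ω

/-- Standardisation of a random variable. -/
def std (n m : ℕ) (p : ℝ) (F : Om n m → ℝ) (ω : Om n m) : ℝ :=
  (F ω - EE n m p F) / Real.sqrt (VarE n m p F)

/-- The standard normal CDF. -/
def Phi (t : ℝ) : ℝ := (gaussianReal 0 1 (Set.Iic t)).toReal

/-- Kolmogorov distance between (the law of) `F` and the standard normal. -/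
def dK (n m : ℕ) (p : ℝ) (F : Om n m → ℝ) : ℝ :=
  ⨆ t : ℝ, |Pr n m p {ω | F ω ≤ t} - Phi t|

/-- Wasserstein distance between (the law of) `F` and the standard normal. -/
def dW (n m : ℕ) (p : ℝ) (F : Om n m → ℝ) : ℝ :=
  ⨆ h : {h : ℝ → ℝ // LipschitzWith 1 h},
    |EE n m p (fun ω => h.1 (F ω)) - ∫ x, h.1 x ∂(gaussianReal 0 1)|

/-- `d_{K/W}`: the maximum of the Kolmogorov and Wasserstein distances. -/
def dKW (n m : ℕ) (p : ℝ) (F : Om n m → ℝ) : ℝ := max (dK n m p F) (dW n m p F)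

/-- The edge probability `p̂ = 1 - (1-p²)^m`. -/
def phat (m : ℕ) (p : ℝ) : ℝ := 1 - (1 - p ^ 2) ^ m

/-- The number of edges of `G(n,m,p)`: two vertices are adjacent iff they share
a chosen attribute. -/
def NE (n m : ℕ) (ω : Om n m) : ℝ :=
  ∑ k : Fin n, ∑ l : Fin n,
    if k < l ∧ ∃ a : Fin m, ω k a ∧ ω l a then 1 else 0


/-- Assemble `k` variables from three blocks: the first `a` from `w`, the next
`b - a` from `x` and the last `k - b` from `y`. -/
def asm3 {m : ℕ} (a b k : ℕ) (w : Fin a → V m) (x : Fin (b - a) → V m)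
    (y : Fin (k - b) → V m) : Fin k → V m := fun i =>
  if h1 : (i : ℕ) < a then w ⟨i, h1⟩
  else if h2 : (i : ℕ) < b then x ⟨(i : ℕ) - a, by omega⟩
  else y ⟨(i : ℕ) - b, by have := i.isLt; omega⟩

/-- The contraction `f *_b^a g` of `f : (V m)^k → ℝ` and `g : (V m)^l → ℝ`:
the first `a` variables are shared and integrated out, the next `b - a`
variables are shared, and the remaining variable blocks are separate. -/
def contract (m : ℕ) (p : ℝ) (k l a b : ℕ)
    (f : (Fin k → V m) → ℝ) (g : (Fin l → V m) → ℝ)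
    (x : Fin (b - a) → V m) (y : Fin (k - b) → V m) (z : Fin (l - b) → V m) : ℝ :=
  ∑ w : Fin a → V m, bwk m a p w * (f (asm3 a b k w x y) * g (asm3 a b l w x z))

/-- Squared `L²` norm `‖f *_b^a g‖₂²` of a contraction. -/
def contractNormSq (m : ℕ) (p : ℝ) (k l a b : ℕ)
    (f : (Fin k → V m) → ℝ) (g : (Fin l → V m) → ℝ) : ℝ :=
  ∑ x : Fin (b - a) → V m, ∑ y : Fin (k - b) → V m, ∑ z : Fin (l - b) → V m,
    bwk m (b - a) p x * bwk m (k - b) p y * bwk m (l - b) p z *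
      contract m p k l a b f g x y z ^ 2

/-- `L²` norm `‖f *_b^a g‖₂` of a contraction. -/
def contractNorm (m : ℕ) (p : ℝ) (k l a b : ℕ)
    (f : (Fin k → V m) → ℝ) (g : (Fin l → V m) → ℝ) : ℝ :=
  Real.sqrt (contractNormSq m p k l a b f g)

/-- `h_j`: integrating out the last `r - j` variables of `h`. -/
def marg (m r j : ℕ) (p : ℝ) (h : (Fin r → V m) → ℝ) (x : Fin j → V m) : ℝ :=
  ∑ y : Fin (r - j) → V m, bwk m (r - j) p y *
    h fun i =>
      if hi : (i : ℕ) < j then x ⟨i, hi⟩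
      else y ⟨(i : ℕ) - j, by have := i.isLt; omega⟩

/-- The centralization `f̄ = f - ∫ f dμ^{⊗k}`. -/
def center (m k : ℕ) (p : ℝ) (f : (Fin k → V m) → ℝ) : (Fin k → V m) → ℝ :=
  fun x => f x - intk m k p f

/-- `Φ_{x_i} f`: centralization of `f` in the `i`-th coordinate. -/
def phiC (m k : ℕ) (p : ℝ) (i : Fin k) (f : (Fin k → V m) → ℝ) :
    (Fin k → V m) → ℝ :=
  fun x => f x - ∑ t : V m, bw m p t * f (Function.update x i t)

/-- The coordinate-wise centralization `f̈ = Φ_{x₁} ⋯ Φ_{x_k} f`. -/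
def ddot (m k : ℕ) (p : ℝ) (f : (Fin k → V m) → ℝ) : (Fin k → V m) → ℝ :=
  (List.finRange k).foldr (phiC m k p) f

/-- The U-statistic `X = ∑_{1 ≤ k₁ < … < k_r ≤ n} h(A^{(k₁)}, …, A^{(k_r)})`. -/
def Ustat (n m r : ℕ) (h : (Fin r → V m) → ℝ) (ω : Om n m) : ℝ :=
  ∑ s : {s : Finset (Fin n) // s.card = r}, h fun i => ω (s.1.orderEmbOfFin s.2 i)


/-- The attribute `a` *builds* the set `C ⊆ V(H)` (where `S = V(H)`): all
vertices of `C` chose `a` and no other vertex of `S` chose `a`. -/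
def Builds (n m : ℕ) (ω : Om n m) (a : Fin m) (S C : Finset (Fin n)) : Prop :=
  (∀ v ∈ C, ω v a = true) ∧ ∀ v ∈ S, v ∉ C → ω v a = false

/-- `𝒫(H)`: the family of subsets of `S = V(H)` containing both endpoints of at
least one edge of `H` (edges given by the family `E` of `2`-element sets). -/
def Pcal (n : ℕ) (S : Finset (Fin n)) (E : Finset (Finset (Fin n))) :
    Finset (Finset (Fin n)) :=
  S.powerset.filter fun C => ∃ e ∈ E, e ⊆ C

/-- `𝒞` is a clique cover of the graph `H = (S, E)`. -/
def IsCliqueCover (n : ℕ) (S : Finset (Fin n)) (E : Finset (Finset (Fin n)))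
    (𝒞 : Finset (Finset (Fin n))) : Prop :=
  𝒞 ⊆ Pcal n S E ∧ ∀ e ∈ E, ∃ C ∈ 𝒞, e ⊆ C

/-- `H = (S, E)` is *given by* the clique cover `𝒞` in `G(n,m,p)`: every
`C ∈ 𝒞` is built by some attribute and no member of `𝒫(H) \ 𝒞` is built by
any attribute. -/
def GivenBy (n m : ℕ) (ω : Om n m) (S : Finset (Fin n))
    (E : Finset (Finset (Fin n))) (𝒞 : Finset (Finset (Fin n))) : Prop :=
  (∀ C ∈ 𝒞, ∃ a : Fin m, Builds n m ω a S C) ∧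
    ∀ C ∈ Pcal n S E, C ∉ 𝒞 → ∀ a : Fin m, ¬Builds n m ω a S C

/-- `π(H, 𝒞)`: probability that `H` is given by precisely the clique cover `𝒞`. -/
def piCC (n m : ℕ) (p : ℝ) (S : Finset (Fin n)) (E : Finset (Finset (Fin n)))
    (𝒞 : Finset (Finset (Fin n))) : ℝ :=
  Pr n m p {ω | GivenBy n m ω S E 𝒞}

/-- `π(H, 𝒞₊, 𝒞₋)`: probability that `H` is given by some clique cover `𝒞`
with `𝒞₊ ⊆ 𝒞 ⊆ 𝒫(H) \ 𝒞₋`. -/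
def piPM (n m : ℕ) (p : ℝ) (S : Finset (Fin n)) (E : Finset (Finset (Fin n)))
    (Cp Cm : Finset (Finset (Fin n))) : ℝ :=
  Pr n m p {ω | ∃ 𝒞 : Finset (Finset (Fin n)),
    Cp ⊆ 𝒞 ∧ 𝒞 ⊆ Pcal n S E \ Cm ∧ IsCliqueCover n S E 𝒞 ∧ GivenBy n m ω S E 𝒞}

/-- `p_C = p^{|C|} (1-p)^{|V(H)| - |C|}`. -/
def pC (n : ℕ) (p : ℝ) (S C : Finset (Fin n)) : ℝ :=
  p ^ C.card * (1 - p) ^ (S.card - C.card)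

open Classical in
/-- The family `𝒦(F,G)` of all clique covers `𝒞` of `F ∪ G` with
`E(G) ⊆ 𝒞 ⊆ 𝒫(F ∪ G) \ E(F)`. -/
def Kfam (n : ℕ) (S : Finset (Fin n)) (EF EG : Finset (Finset (Fin n))) :
    Finset (Finset (Finset (Fin n))) :=
  (Pcal n S (EF ∪ EG)).powerset.filter fun 𝒞 =>
    IsCliqueCover n S (EF ∪ EG) 𝒞 ∧ EG ⊆ 𝒞 ∧ Disjoint 𝒞 EF


/-- The edge kernel `g(x,y) = 1` iff `x` and `y` share a common attribute. -/
def gfun (m : ℕ) (x y : V m) : ℝ := if ∃ i : Fin m, x i ∧ y i then 1 else 0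

/-- `g₁(x) = ∫ g(x,y) dμ_{m,p}(y)`. -/
def g1 (m : ℕ) (p : ℝ) (x : V m) : ℝ := ∑ y : V m, bw m p y * gfun m x y

/-- `ḡ₁ = g₁ - p̂`. -/
def gbar1 (m : ℕ) (p : ℝ) (x : V m) : ℝ := g1 m p x - phat m p

/-- `ḡ₂(x,y) = g(x,y) - p̂`. -/
def gbar2 (m : ℕ) (p : ℝ) (x y : V m) : ℝ := gfun m x y - phat m p

/-- `ρ = 1 - g`. -/
def rho (m : ℕ) (x y : V m) : ℝ := 1 - gfun m x y

/-- `ρ₁(x) = ∫ ρ(x,y) dμ_{m,p}(y)`. -/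
def rho1 (m : ℕ) (p : ℝ) (x : V m) : ℝ := ∑ y : V m, bw m p y * rho m x y

/-- The probability that all the (ordered-pair) edges in `Ed` are present in
`G(n,m,p)`, i.e. `P(H ⊆ G(n,m,p))` for the graph `H` with edge set `Ed`. -/
def piSub (n m : ℕ) (p : ℝ) (Ed : Finset (Fin n × Fin n)) : ℝ :=
  Pr n m p {ω | ∀ e ∈ Ed, ∃ a : Fin m, ω e.1 a ∧ ω e.2 a}

/-- The set of vertices used by the edge set `Ed`. -/
def supp (n : ℕ) (Ed : Finset (Fin n × Fin n)) : Finset (Fin n) :=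
  Ed.image Prod.fst ∪ Ed.image Prod.snd

/-- Edge pattern of `G₁ ≅ K_{1,4}` on `8` labels: edge `k` joins the centre `0`
with the leaf `k+1`. -/
def edg1 (k : Fin 4) : Fin 8 × Fin 8 := (0, ⟨(k : ℕ) + 1, by omega⟩)

/-- Edge pattern of `G₂ ≅ C₄` on `8` labels: edge `k = (a,b)` joins `v_a = a`
with `u_b = 2 + b`, where `a = k / 2` and `b = k % 2`. -/
def edg2 (k : Fin 4) : Fin 8 × Fin 8 :=
  (⟨(k : ℕ) / 2, by omega⟩, ⟨2 + (k : ℕ) % 2, by omega⟩)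

/-- Edge pattern of `G₃ ≅ P₅` (path `z₁–x₁–y–x₂–z₂` with `y = 0`, `x₁ = 1`,
`x₂ = 2`, `z₁ = 3`, `z₂ = 4`): edges `e₁₁ = {x₁,y}`, `e₁₂ = {x₁,z₁}`,
`e₂₁ = {x₂,y}`, `e₂₂ = {x₂,z₂}`. -/
def edg3 : Fin 4 → Fin 8 × Fin 8 := ![(1, 0), (1, 3), (2, 0), (2, 4)]

/-- The edges of `G_{i,I}` inside `Fin n`, via the injection `v`. -/
def bedg (n : ℕ) (v : Fin 8 → Fin n) (edg : Fin 4 → Fin 8 × Fin 8)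
    (I : Finset (Fin 4)) : Finset (Fin n × Fin n) :=
  I.image fun k => (v (edg k).1, v (edg k).2)

/-- The edges of `H_{i,I}`: the edges of `G_{i,I}` together with the isolated
edges `iso I k`, `k ∉ I`. -/
def Hset (n : ℕ) (v : Fin 8 → Fin n) (edg : Fin 4 → Fin 8 × Fin 8)
    (iso : Finset (Fin 4) → Fin 4 → Fin n × Fin n) (I : Finset (Fin 4)) :
    Finset (Fin n × Fin n) :=
  bedg n v edg I ∪ Iᶜ.image (iso I)

/-- For every `I`, the isolated edges `iso I k`, `k ∉ I`, are proper edges,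
pairwise vertex-disjoint, vertex-disjoint from `G_{i,I}`, and the resulting
graph `H_{i,I}` lives on (at most) `8` vertices. -/
def GoodIso (n : ℕ) (v : Fin 8 → Fin n) (edg : Fin 4 → Fin 8 × Fin 8)
    (iso : Finset (Fin 4) → Fin 4 → Fin n × Fin n) : Prop :=
  ∀ I : Finset (Fin 4),
    (∀ k ∉ I, (iso I k).1 ≠ (iso I k).2 ∧
      (iso I k).1 ∉ supp n (bedg n v edg I) ∧
      (iso I k).2 ∉ supp n (bedg n v edg I)) ∧
    (∀ k ∉ I, ∀ k' ∉ I, k ≠ k' →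
      Disjoint ({(iso I k).1, (iso I k).2} : Finset (Fin n))
        {(iso I k').1, (iso I k').2}) ∧
    (supp n (Hset n v edg iso I)).card ≤ 8



section Aux
open Classical in
/-- sum over functions of product = product of sums -/
lemma sum_prod_pi {ι : Type*} [Fintype ι] [DecidableEq ι] {κ : Type*} [Fintype κ]
    (c : ι → κ → ℝ) :
    ∑ f : ι → κ, ∏ i, c i (f i) = ∏ i, ∑ x, c i x := by
  rw [Fintype.prod_sum]

lemma sum_bool_pi {m : ℕ} (g : Fin m → Bool → ℝ) :
    ∑ x : V m, ∏ i, g i (x i) = ∏ i, (g i true + g i false) := by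
  rw [sum_prod_pi]
  congr 1; ext i; rw [Fintype.sum_bool]

lemma sum_bw (m : ℕ) (p : ℝ) : ∑ x : V m, bw m p x = 1 := by
  have : ∑ x : V m, bw m p x
      = ∏ i : Fin m, ((if true then p else 1-p) + (if false then p else 1-p)) :=
    sum_bool_pi fun i b => if b then p else 1 - p
  simp only [if_true, if_false] at this
  rw [this]; simp

lemma sum_Wt (n m : ℕ) (p : ℝ) : ∑ ω : Om n m, Wt n m p ω = 1 := by
  have : ∑ ω : Om n m, Wt n m p ω = ∏ _k : Fin n, ∑ x : V m, bw m p x :=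
    sum_prod_pi fun _ x => bw m p x
  rw [this]; simp [sum_bw]

variable {n m : ℕ} {p : ℝ}

lemma bw_nonneg (hp0 : 0 ≤ p) (hp1 : p ≤ 1) (x : V m) : 0 ≤ bw m p x :=
  Finset.prod_nonneg fun i _ => by
    by_cases h : x i
    · simpa [h]
    · simp only [h, Bool.false_eq_true, if_false]; linarith

lemma Wt_nonneg (hp0 : 0 ≤ p) (hp1 : p ≤ 1) (ω : Om n m) : 0 ≤ Wt n m p ω :=
  Finset.prod_nonneg fun k _ => bw_nonneg hp0 hp1 _

open Classical in
lemma Pr_eq_sum_ite (s : Set (Om n m)) :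
    Pr n m p s = ∑ ω : Om n m, if ω ∈ s then Wt n m p ω else 0 := by
  unfold Pr
  simp [Set.indicator_apply]

lemma Pr_nonneg (hp0 : 0 ≤ p) (hp1 : p ≤ 1) (s : Set (Om n m)) : 0 ≤ Pr n m p s := by
  classical
  rw [Pr_eq_sum_ite]
  exact Finset.sum_nonneg fun ω _ => by
    by_cases h : ω ∈ s <;> simp [h, Wt_nonneg hp0 hp1]

lemma Pr_empty : Pr n m p (∅ : Set (Om n m)) = 0 := by
  rw [Pr_eq_sum_ite]; simp

lemma Pr_univ : Pr n m p (Set.univ : Set (Om n m)) = 1 := by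
  rw [Pr_eq_sum_ite]; simpa using sum_Wt n m p

lemma Pr_mono (hp0 : 0 ≤ p) (hp1 : p ≤ 1) {s t : Set (Om n m)} (h : s ⊆ t) :
    Pr n m p s ≤ Pr n m p t := by
  classical
  rw [Pr_eq_sum_ite, Pr_eq_sum_ite]
  refine Finset.sum_le_sum fun ω _ => ?_
  by_cases hs : ω ∈ s
  · simp [hs, h hs]
  · by_cases ht : ω ∈ t <;> simp [hs, ht, Wt_nonneg hp0 hp1]

lemma Pr_le_one (hp0 : 0 ≤ p) (hp1 : p ≤ 1) (s : Set (Om n m)) : Pr n m p s ≤ 1 := by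
  rw [← Pr_univ (n := n) (m := m) (p := p)]
  exact Pr_mono hp0 hp1 (Set.subset_univ s)

lemma Pr_diff_le {s t : Set (Om n m)} (hst : s ⊆ t) (u : Set (Om n m))
    (hu : u ⊆ t) (hus : ∀ ω ∈ u, ω ∉ s) (hp0 : 0 ≤ p) (hp1 : p ≤ 1) :
    Pr n m p u ≤ Pr n m p t - Pr n m p s := by
  classical
  rw [Pr_eq_sum_ite, Pr_eq_sum_ite, Pr_eq_sum_ite, ← Finset.sum_sub_distrib]
  refine Finset.sum_le_sum fun ω _ => ?_
  by_cases hωu : ω ∈ u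
  · simp [hωu, hu hωu, hus ω hωu]
  · by_cases hωs : ω ∈ s
    · simp [hωu, hωs, hst hωs]
    · by_cases hωt : ω ∈ t <;> simp [hωu, hωs, hωt, Wt_nonneg hp0 hp1]

end Aux
section Aux2
variable {n m : ℕ} {p : ℝ}

open Classical in
lemma Pr_eq_EE (s : Set (Om n m)) :
    Pr n m p s = EE n m p (fun ω => if ω ∈ s then 1 else 0) := by
  rw [Pr_eq_sum_ite]; unfold EE
  refine Finset.sum_congr rfl fun ω _ => ?_
  by_cases h : ω ∈ s <;> simp [h]

open Classical in
/-- key marginal computation for two coordinates -/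
lemma sum_Wt_pair (k l : Fin n) (hkl : k ≠ l) (x y : V m) :
    ∑ ω : Om n m, (if ω k = x ∧ ω l = y then Wt n m p ω else 0)
      = bw m p x * bw m p y := by
  classical
  set c : Fin n → V m → ℝ := fun j t =>
    if j = k then (if t = x then bw m p t else 0)
    else if j = l then (if t = y then bw m p t else 0) else bw m p t with hc_def
  have hc : ∀ ω : Om n m, (if ω k = x ∧ ω l = y then Wt n m p ω else 0)
      = ∏ j : Fin n, c j (ω j) := by
    intro ω
    by_cases h : ω k = x ∧ ω l = y
    · rw [if_pos h]
      unfold Wt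
      refine Finset.prod_congr rfl fun j _ => ?_
      by_cases hjk : j = k
      · subst hjk; simp [hc_def, h.1]
      · by_cases hjl : j = l
        · subst hjl; simp [hc_def, hjk, h.2]
        · simp [hc_def, hjk, hjl]
    · rw [if_neg h]
      rcases not_and_or.mp h with h1 | h1
      · refine (Finset.prod_eq_zero (Finset.mem_univ k) ?_).symm
        simp [hc_def, h1]
      · refine (Finset.prod_eq_zero (Finset.mem_univ l) ?_).symm
        simp [hc_def, Ne.symm hkl, h1]
  rw [Finset.sum_congr rfl fun ω _ => hc ω, sum_prod_pi]
  have hprod : ∀ j : Fin n, (∑ t : V m, c j t)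
      = if j = k then bw m p x else if j = l then bw m p y else 1 := by
    intro j
    by_cases hjk : j = k
    · simp [hc_def, hjk, Finset.sum_ite_eq' Finset.univ x (bw m p)]
    · by_cases hjl : j = l
      · simp [hc_def, hjk, hjl, Finset.sum_ite_eq' Finset.univ y (bw m p)]
      · simp [hc_def, hjk, hjl, sum_bw]
  rw [Finset.prod_congr rfl fun j _ => hprod j]
  have hsub : ∏ j : Fin n, (if j = k then bw m p x else if j = l then bw m p y else 1)
      = ∏ j ∈ ({k, l} : Finset (Fin n)),
          (if j = k then bw m p x else if j = l then bw m p y else 1) := by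
    refine (Finset.prod_subset (Finset.subset_univ _) fun j _ hj => ?_).symm
    simp only [Finset.mem_insert, Finset.mem_singleton, not_or] at hj
    simp [hj.1, hj.2]
  rw [hsub, Finset.prod_pair hkl]
  simp [hkl, Ne.symm hkl]

open Classical in
lemma EE_pair (k l : Fin n) (hkl : k ≠ l) (f : V m → V m → ℝ) :
    EE n m p (fun ω => f (ω k) (ω l))
      = ∑ x : V m, ∑ y : V m, bw m p x * bw m p y * f x y := by
  classical
  unfold EE
  have hstep : ∀ ω : Om n m, Wt n m p ω * f (ω k) (ω l)
      = ∑ x : V m, ∑ y : V m,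
          (if ω k = x ∧ ω l = y then Wt n m p ω else 0) * f x y := by
    intro ω
    rw [Finset.sum_eq_single (ω k)]
    · rw [Finset.sum_eq_single (ω l)]
      · simp
      · intro y _ hy; simp [Ne.symm hy]
      · intro h; exact absurd (Finset.mem_univ _) h
    · intro x _ hx
      refine Finset.sum_eq_zero fun y _ => ?_
      simp [Ne.symm hx]
    · intro h; exact absurd (Finset.mem_univ _) h
  rw [Finset.sum_congr rfl fun ω _ => hstep ω, Finset.sum_comm]
  refine Finset.sum_congr rfl fun x _ => ?_
  rw [Finset.sum_comm]
  refine Finset.sum_congr rfl fun y _ => ?_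
  rw [← Finset.sum_mul, sum_Wt_pair k l hkl x y]

lemma gfun_avg :
    ∑ x : V m, ∑ y : V m, bw m p x * bw m p y * gfun m x y = phat m p := by
  classical
  have hg : ∀ x y : V m, gfun m x y
      = 1 - ∏ a : Fin m, (if x a ∧ y a then (0:ℝ) else 1) := by
    intro x y
    unfold gfun
    by_cases h : ∃ a : Fin m, x a ∧ y a
    · obtain ⟨a, ha⟩ := h
      have h0 : ∏ a : Fin m, (if x a ∧ y a then (0:ℝ) else 1) = 0 :=
        Finset.prod_eq_zero (Finset.mem_univ a) (if_pos ha)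
      rw [if_pos ⟨a, ha⟩, h0]; norm_num
    · have h1 : ∏ a : Fin m, (if x a ∧ y a then (0:ℝ) else 1) = 1 :=
        Finset.prod_eq_one fun a _ => if_neg fun hc => h ⟨a, hc⟩
      rw [if_neg h, h1]; norm_num
  have key : ∀ x : V m, ∑ y : V m, bw m p y * ∏ a : Fin m, (if x a ∧ y a then (0:ℝ) else 1)
      = ∏ a : Fin m, (if x a then 1 - p else 1) := by
    intro x
    have hrw : ∀ y : V m, bw m p y * ∏ a : Fin m, (if x a ∧ y a then (0:ℝ) else 1)
        = ∏ a : Fin m, ((if y a then p else 1 - p) * (if x a ∧ y a then (0:ℝ) else 1)) := by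
      intro y; rw [bw, ← Finset.prod_mul_distrib]
    rw [Finset.sum_congr rfl fun y _ => hrw y,
      sum_bool_pi fun a b => (if b then p else 1 - p) * (if x a ∧ b then (0:ℝ) else 1)]
    refine Finset.prod_congr rfl fun a _ => ?_
    by_cases h : x a <;> simp [h] <;> ring
  have key2 : ∑ x : V m, bw m p x * ∏ a : Fin m, (if x a then 1 - p else 1)
      = (1 - p^2)^m := by
    have hrw : ∀ x : V m, bw m p x * ∏ a : Fin m, (if x a then 1 - p else 1)
        = ∏ a : Fin m, ((if x a then p else 1 - p) * (if x a then 1 - p else 1)) := by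
      intro x; rw [bw, ← Finset.prod_mul_distrib]
    rw [Finset.sum_congr rfl fun x _ => hrw x,
      sum_bool_pi fun a b => (if b then p else 1 - p) * (if b then 1 - p else 1)]
    norm_num
    congr 1; ring
  have main : ∀ x : V m, ∑ y : V m, bw m p x * bw m p y * gfun m x y
      = bw m p x - bw m p x * ∏ a : Fin m, (if x a then 1 - p else 1) := by
    intro x
    have hterm : ∀ y : V m, bw m p x * bw m p y * gfun m x y
        = bw m p x * bw m p y
          - bw m p x * (bw m p y * ∏ a : Fin m, (if x a ∧ y a then (0:ℝ) else 1)) := by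
      intro y; rw [hg x y]; ring
    rw [Finset.sum_congr rfl fun y _ => hterm y, Finset.sum_sub_distrib,
      ← Finset.mul_sum, ← Finset.mul_sum, sum_bw, key x, mul_one]
  rw [Finset.sum_congr rfl fun x _ => main x, Finset.sum_sub_distrib, sum_bw, key2]
  rfl

end Aux2
section Aux3
variable {n m : ℕ} {p : ℝ}

open Classical in
lemma sum_edge (k l : Fin n) (hkl : k ≠ l) :
    ∑ ω : Om n m, (if ∃ a : Fin m, ω k a ∧ ω l a then Wt n m p ω else 0)
      = phat m p := by
  have h1 : ∑ ω : Om n m, (if ∃ a : Fin m, ω k a ∧ ω l a then Wt n m p ω else 0)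
      = EE n m p (fun ω => gfun m (ω k) (ω l)) := by
    refine Finset.sum_congr rfl fun ω _ => ?_
    by_cases h : ∃ a : Fin m, ω k a ∧ ω l a <;> simp [h, gfun]
  rw [h1, EE_pair k l hkl, gfun_avg]

open Classical in
lemma Pr_edge (k l : Fin n) (hkl : k ≠ l) :
    Pr n m p {ω : Om n m | ∃ a : Fin m, ω k a ∧ ω l a} = phat m p := by
  rw [Pr_eq_sum_ite, ← sum_edge k l hkl]
  refine Finset.sum_congr rfl fun ω _ => ?_
  by_cases h : ∃ a : Fin m, ω k a ∧ ω l a <;> simp [h, Set.mem_setOf_eq]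

lemma EE_NE :
    EE n m p (NE n m)
      = (∑ k : Fin n, ∑ l : Fin n, if k < l then (1:ℝ) else 0) * phat m p := by
  classical
  unfold EE NE
  have hsplit : ∀ ω : Om n m,
      Wt n m p ω * (∑ k : Fin n, ∑ l : Fin n,
        if k < l ∧ ∃ a : Fin m, ω k a ∧ ω l a then (1:ℝ) else 0)
      = ∑ k : Fin n, ∑ l : Fin n,
          (if k < l ∧ ∃ a : Fin m, ω k a ∧ ω l a then Wt n m p ω else 0) := by
    intro ω
    rw [Finset.mul_sum]
    refine Finset.sum_congr rfl fun k _ => ?_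
    rw [Finset.mul_sum]
    refine Finset.sum_congr rfl fun l _ => ?_
    by_cases h : k < l ∧ ∃ a : Fin m, ω k a ∧ ω l a <;> simp [h]
  rw [Finset.sum_congr rfl fun ω _ => hsplit ω, Finset.sum_comm, Finset.sum_mul]
  refine Finset.sum_congr rfl fun k _ => ?_
  rw [Finset.sum_comm, Finset.sum_mul]
  refine Finset.sum_congr rfl fun l _ => ?_
  by_cases hkl : k < l
  · have h2 : ∀ ω : Om n m,
        (if k < l ∧ ∃ a : Fin m, ω k a ∧ ω l a then Wt n m p ω else 0)
        = if ∃ a : Fin m, ω k a ∧ ω l a then Wt n m p ω else 0 := by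
      intro ω
      by_cases h : ∃ a : Fin m, ω k a ∧ ω l a <;> simp [h, hkl]
    rw [Finset.sum_congr rfl fun ω _ => h2 ω, sum_edge k l (ne_of_lt hkl)]
    simp [hkl]
  · simp [hkl]

lemma NE_nonneg (ω : Om n m) : 0 ≤ NE n m ω := by
  refine Finset.sum_nonneg fun k _ => Finset.sum_nonneg fun l _ => ?_
  by_cases h : k < l ∧ ∃ a : Fin m, ω k a ∧ ω l a <;> simp [h]

lemma NE_le_S (ω : Om n m) :
    NE n m ω ≤ ∑ k : Fin n, ∑ l : Fin n, if k < l then (1:ℝ) else 0 := by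
  refine Finset.sum_le_sum fun k _ => Finset.sum_le_sum fun l _ => ?_
  by_cases h : k < l
  · by_cases h2 : ∃ a : Fin m, ω k a ∧ ω l a <;> simp [h, h2]
  · simp [h]

lemma S_nonneg : (0:ℝ) ≤ ∑ k : Fin n, ∑ l : Fin n, if k < l then (1:ℝ) else 0 := by
  refine Finset.sum_nonneg fun k _ => Finset.sum_nonneg fun l _ => ?_
  by_cases h : k < l <;> simp [h]

lemma S_le_sq : (∑ k : Fin n, ∑ l : Fin n, if k < l then (1:ℝ) else 0) ≤ (n:ℝ)^2 := by
  calc (∑ k : Fin n, ∑ l : Fin n, if k < l then (1:ℝ) else 0)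
      ≤ ∑ _k : Fin n, ∑ _l : Fin n, (1:ℝ) := by
        refine Finset.sum_le_sum fun k _ => Finset.sum_le_sum fun l _ => ?_
        by_cases h : k < l <;> simp [h]
    _ = (n:ℝ)^2 := by simp; ring

/-- NE is integer-valued with values at most `n^2`. -/
lemma NE_nat (ω : Om n m) : ∃ j : ℕ, j ≤ n^2 ∧ NE n m ω = (j:ℝ) := by
  classical
  refine ⟨∑ k : Fin n, ∑ l : Fin n,
    if k < l ∧ ∃ a : Fin m, ω k a ∧ ω l a then 1 else 0, ?_, ?_⟩
  · calc (∑ k : Fin n, ∑ l : Fin n,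
        if k < l ∧ ∃ a : Fin m, ω k a ∧ ω l a then 1 else 0)
        ≤ ∑ _k : Fin n, ∑ _l : Fin n, 1 := by
          refine Finset.sum_le_sum fun k _ => Finset.sum_le_sum fun l _ => ?_
          by_cases h : k < l ∧ ∃ a : Fin m, ω k a ∧ ω l a <;> simp [h]
      _ = n^2 := by simp; ring
  · unfold NE
    push_cast
    refine Finset.sum_congr rfl fun k _ => Finset.sum_congr rfl fun l _ => ?_
    by_cases h : k < l ∧ ∃ a : Fin m, ω k a ∧ ω l a <;> simp [h]

lemma phat_nonneg (hp0 : 0 ≤ p) (hp1 : p ≤ 1) : 0 ≤ phat m p := by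
  unfold phat
  have h1 : (1 - p^2)^m ≤ 1 := by
    refine pow_le_one₀ ?_ ?_ <;> nlinarith
  linarith

lemma phat_le_one (hp0 : 0 ≤ p) (hp1 : p ≤ 1) : phat m p ≤ 1 := by
  unfold phat
  have h1 : (0:ℝ) ≤ (1 - p^2)^m := pow_nonneg (by nlinarith) m
  linarith

end Aux3
section Aux4
variable {n m : ℕ} {p : ℝ}

lemma VarE_nonneg (hp0 : 0 ≤ p) (hp1 : p ≤ 1) (F : Om n m → ℝ) :
    0 ≤ VarE n m p F := by
  unfold VarE EE
  exact Finset.sum_nonneg fun ω _ =>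
    mul_nonneg (Wt_nonneg hp0 hp1 ω) (sq_nonneg _)

lemma sq_sqrt_VarE (hp0 : 0 ≤ p) (hp1 : p ≤ 1) (F : Om n m → ℝ) :
    Real.sqrt (VarE n m p F) ^ 2 = VarE n m p F :=
  Real.sq_sqrt (VarE_nonneg hp0 hp1 F)

lemma Pr_compl (s : Set (Om n m)) :
    Pr n m p s + Pr n m p sᶜ = 1 := by
  classical
  rw [Pr_eq_sum_ite, Pr_eq_sum_ite, ← Finset.sum_add_distrib, ← sum_Wt n m p]
  refine Finset.sum_congr rfl fun ω _ => ?_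
  by_cases h : ω ∈ s <;> simp [h]

/-- Chebyshev: the probability that `|F - EE F| > 2 σ` is at most 1/4. -/
lemma cheby (hp0 : 0 ≤ p) (hp1 : p ≤ 1) (F : Om n m → ℝ)
    (hσ : 0 < Real.sqrt (VarE n m p F)) :
    Pr n m p {ω | ¬ |F ω - EE n m p F| ≤ 2 * Real.sqrt (VarE n m p F)} ≤ 1/4 := by
  classical
  set σ := Real.sqrt (VarE n m p F) with hσdef
  set μ := EE n m p F with hμdef
  have hVar : VarE n m p F = ∑ ω : Om n m, Wt n m p ω * (F ω - μ)^2 := rfl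
  have key : 4 * σ^2 * Pr n m p {ω | ¬ |F ω - μ| ≤ 2 * σ} ≤ VarE n m p F := by
    rw [Pr_eq_sum_ite, Finset.mul_sum, hVar]
    refine Finset.sum_le_sum fun ω _ => ?_
    by_cases h : ω ∈ {ω | ¬ |F ω - μ| ≤ 2 * σ}
    · rw [if_pos h]
      have h2 : 2 * σ < |F ω - μ| := not_le.mp h
      have h3 : (2*σ)^2 ≤ (F ω - μ)^2 := by
        rw [← sq_abs (F ω - μ)]
        exact pow_le_pow_left₀ (by positivity) h2.le 2
      have h4 := Wt_nonneg (n := n) (m := m) hp0 hp1 ω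
      nlinarith
    · rw [if_neg h, mul_zero]
      exact mul_nonneg (Wt_nonneg hp0 hp1 ω) (sq_nonneg _)
  have hv : VarE n m p F = σ^2 := (sq_sqrt_VarE hp0 hp1 F).symm
  rw [hv] at key
  have hσ2 : 0 < σ^2 := by positivity
  nlinarith [key]

/-- existence of a large atom when σ is small -/
lemma exists_atom (hp0 : 0 ≤ p) (hp1 : p ≤ 1) {B : ℝ} (hB : 1 ≤ B)
    (hσpos : 0 < Real.sqrt (VarE n m p (NE n m)))
    (hσle : Real.sqrt (VarE n m p (NE n m)) ≤ B) :
    ∃ j : ℝ, |j - EE n m p (NE n m)| ≤ 2 * Real.sqrt (VarE n m p (NE n m)) ∧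
      3 / (4 * (4 * B + 1)) ≤ Pr n m p {ω | NE n m ω = j} := by
  classical
  set σ := Real.sqrt (VarE n m p (NE n m)) with hσdef
  set μ := EE n m p (NE n m) with hμdef
  set δ : ℝ := 3 / (4 * (4 * B + 1)) with hδdef
  have hgood : 3/4 ≤ Pr n m p {ω | |NE n m ω - μ| ≤ 2 * σ} := by
    have h1 := cheby hp0 hp1 (NE n m) hσpos
    have h2 := Pr_compl (n := n) (m := m) (p := p) {ω | |NE n m ω - μ| ≤ 2 * σ}
    have h3 : ({ω : Om n m | |NE n m ω - μ| ≤ 2 * σ})ᶜ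
        = {ω | ¬ |NE n m ω - μ| ≤ 2 * σ} := rfl
    rw [h3] at h2
    linarith
  set J : Finset ℕ := (Finset.range (n^2+1)).filter
    (fun j => |(j:ℝ) - μ| ≤ 2 * σ) with hJdef
  have hsubJ : Pr n m p {ω | |NE n m ω - μ| ≤ 2 * σ}
      ≤ ∑ j ∈ J, Pr n m p {ω | NE n m ω = (j:ℝ)} := by
    rw [Pr_eq_sum_ite]
    have : ∀ j ∈ J, Pr n m p {ω | NE n m ω = (j:ℝ)}
        = ∑ ω : Om n m, (if NE n m ω = (j:ℝ) then Wt n m p ω else 0) := by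
      intro j _
      rw [Pr_eq_sum_ite]
      exact Finset.sum_congr rfl fun ω _ => by
        by_cases h : NE n m ω = (j:ℝ) <;> simp [h, Set.mem_setOf_eq]
    rw [Finset.sum_congr rfl this, Finset.sum_comm]
    refine Finset.sum_le_sum fun ω _ => ?_
    by_cases h : ω ∈ {ω : Om n m | |NE n m ω - μ| ≤ 2 * σ}
    · rw [if_pos h]
      obtain ⟨j, hj2, hj⟩ := NE_nat ω
      have hjJ : j ∈ J := by
        rw [hJdef, Finset.mem_filter, Finset.mem_range]
        exact ⟨Nat.lt_succ_of_le hj2, by rw [← hj]; exact h⟩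
      have hs := Finset.single_le_sum
        (f := fun j : ℕ => if NE n m ω = (j:ℝ) then Wt n m p ω else 0)
        (fun i _ => by
          by_cases h2 : NE n m ω = (i:ℝ) <;> simp [h2, Wt_nonneg hp0 hp1]) hjJ
      simpa [hj] using hs
    · rw [if_neg h]
      exact Finset.sum_nonneg fun j _ => by
        by_cases h2 : NE n m ω = (j:ℝ) <;> simp [h2, Wt_nonneg hp0 hp1]
  have hμ0 : 0 ≤ μ := by
    rw [hμdef]
    unfold EE
    exact Finset.sum_nonneg fun ω _ =>
      mul_nonneg (Wt_nonneg hp0 hp1 ω) (NE_nonneg ω)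
  have hcardJ : (J.card : ℝ) ≤ 4 * B + 1 := by
    set a : ℕ := ⌈μ - 2*σ⌉₊ with hadef
    have hJsub : J ⊆ Finset.image (fun i => a + i) (Finset.range (⌊4*σ⌋₊ + 1)) := by
      intro j hj
      rw [hJdef, Finset.mem_filter] at hj
      have habs := abs_le.mp hj.2
      have haj : a ≤ j := Nat.ceil_le.mpr (by linarith)
      have hja : ((j - a : ℕ) : ℝ) ≤ 4 * σ := by
        have h1 : ((a:ℝ)) ≥ μ - 2*σ := Nat.le_ceil _
        push_cast [haj]
        linarith
      have hfl : j - a ≤ ⌊4*σ⌋₊ := Nat.le_floor hja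
      rw [Finset.mem_image]
      exact ⟨j - a, Finset.mem_range.mpr (Nat.lt_succ_of_le hfl), by omega⟩
    have h1 : J.card ≤ ⌊4*σ⌋₊ + 1 :=
      (Finset.card_le_card hJsub).trans
        ((Finset.card_image_le).trans (by rw [Finset.card_range]))
    have h2 : ((⌊4*σ⌋₊ : ℝ)) ≤ 4*σ := Nat.floor_le (by positivity)
    have h3 : (J.card : ℝ) ≤ (⌊4*σ⌋₊ : ℝ) + 1 := by exact_mod_cast h1
    nlinarith
  by_contra hcon
  push_neg at hcon
  have hJne : J.Nonempty := by
    by_contra hne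
    rw [Finset.not_nonempty_iff_eq_empty] at hne
    rw [hne, Finset.sum_empty] at hsubJ
    linarith
  have hδpos : 0 < δ := by rw [hδdef]; positivity
  have hlt : ∀ j ∈ J, Pr n m p {ω | NE n m ω = ((j:ℕ):ℝ)} < δ := fun j hj =>
    hcon _ ((Finset.mem_filter.mp hj).2)
  have hsum := Finset.sum_lt_sum_of_nonempty hJne hlt
  rw [Finset.sum_const, nsmul_eq_mul] at hsum
  have h5 : (J.card : ℝ) * δ ≤ (4*B+1) * δ :=
    mul_le_mul_of_nonneg_right hcardJ hδpos.le
  have h6 : (4*B+1) * δ = 3/4 := by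
    rw [hδdef]
    field_simp
  linarith

end Aux4
section AuxPhi

lemma gauss_ac : (volume : Measure ℝ) ≪ gaussianReal 0 1 :=
  gaussianReal_absolutelyContinuous' 0 one_ne_zero

lemma gauss_ne_top (s : Set ℝ) : gaussianReal 0 1 s ≠ ⊤ := measure_ne_top _ s

lemma Phi_pos (t : ℝ) : 0 < Phi t := by
  unfold Phi
  refine ENNReal.toReal_pos ?_ (gauss_ne_top _)
  intro h0
  have := gauss_ac h0
  rw [Real.volume_Iic] at this
  exact ENNReal.top_ne_zero this

lemma Phi_lt_one (t : ℝ) : Phi t < 1 := by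
  unfold Phi
  have hioi : gaussianReal 0 1 (Set.Ioi t) ≠ 0 := by
    intro h0
    have := gauss_ac h0
    rw [Real.volume_Ioi] at this
    exact ENNReal.top_ne_zero this
  have hsum : gaussianReal 0 1 (Set.Iic t) + gaussianReal 0 1 (Set.Ioi t) = 1 := by
    rw [← measure_union (Set.Iic_disjoint_Ioi le_rfl) measurableSet_Ioi,
      Set.Iic_union_Ioi, measure_univ]
  have h1 : gaussianReal 0 1 (Set.Iic t) < 1 := by
    refine lt_of_le_of_ne prob_le_one fun heq => hioi ?_
    rw [heq] at hsum
    refine (ENNReal.add_right_inj ENNReal.one_ne_top).mp ?_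
    rw [add_zero]
    exact hsum
  have h2 := (ENNReal.toReal_lt_toReal (gauss_ne_top _) ENNReal.one_ne_top).mpr h1
  simpa using h2

lemma Phi_mono {a b : ℝ} (hab : a ≤ b) : Phi a ≤ Phi b := by
  unfold Phi
  exact ENNReal.toReal_mono (gauss_ne_top _) (measure_mono (Set.Iic_subset_Iic.mpr hab))

lemma gaussianPDF_le_one (x : ℝ) : gaussianPDF 0 1 x ≤ 1 := by
  unfold gaussianPDF
  rw [← ENNReal.ofReal_one]
  refine ENNReal.ofReal_le_ofReal ?_
  unfold gaussianPDFReal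
  simp only [NNReal.coe_one, mul_one, sub_zero]
  have h2π : (1:ℝ) ≤ Real.sqrt (2 * Real.pi) := by
    rw [show (1:ℝ) = Real.sqrt 1 by simp]
    exact Real.sqrt_le_sqrt (by nlinarith [Real.pi_gt_three])
  have hexp : Real.exp (-x^2 / 2) ≤ 1 := by
    rw [Real.exp_le_one_iff]
    nlinarith [sq_nonneg x]
  have hinv : (Real.sqrt (2 * Real.pi))⁻¹ ≤ 1 := inv_le_one_of_one_le₀ h2π
  calc (Real.sqrt (2 * Real.pi))⁻¹ * Real.exp (-x^2 / 2)
      ≤ 1 * 1 := mul_le_mul hinv hexp (Real.exp_nonneg _) (by norm_num)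
    _ = 1 := by norm_num

lemma Phi_diff_le {a b : ℝ} (hab : a ≤ b) : Phi b - Phi a ≤ b - a := by
  unfold Phi
  have hioc : gaussianReal 0 1 (Set.Ioc a b) ≤ ENNReal.ofReal (b - a) := by
    rw [gaussianReal_apply 0 one_ne_zero]
    calc ∫⁻ x in Set.Ioc a b, gaussianPDF 0 1 x
        ≤ ∫⁻ _x in Set.Ioc a b, 1 :=
          lintegral_mono fun x => gaussianPDF_le_one x
      _ = volume (Set.Ioc a b) := by rw [setLIntegral_one]
      _ = ENNReal.ofReal (b - a) := by rw [Real.volume_Ioc]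
  have hsum : gaussianReal 0 1 (Set.Iic b)
      = gaussianReal 0 1 (Set.Iic a) + gaussianReal 0 1 (Set.Ioc a b) := by
    rw [← measure_union ?_ measurableSet_Ioc, Set.Iic_union_Ioc_eq_Iic hab]
    exact Set.Iic_disjoint_Ioc le_rfl
  rw [hsum, ENNReal.toReal_add (gauss_ne_top _) (gauss_ne_top _)]
  have h1 : (gaussianReal 0 1 (Set.Ioc a b)).toReal ≤ b - a := by
    refine ((ENNReal.toReal_le_toReal (gauss_ne_top _) ENNReal.ofReal_ne_top).mpr hioc).trans ?_
    rw [ENNReal.toReal_ofReal (by linarith)]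
  linarith

end AuxPhi
set_option maxHeartbeats 2000000 in
/-- `n² p̂ (1 - p̂) → ∞` is necessary for asymptotic normality of
the standardised edge count (Lemma 7.6). -/
theorem stmt18 (m : ℕ → ℕ) (p : ℕ → ℝ) (hp : ∀ n, 0 < p n ∧ p n < 1)
    (hconv : ∀ t : ℝ,
      Tendsto (fun n => Pr n (m n) (p n) {ω | std n (m n) (p n) (NE n (m n)) ω ≤ t})
        atTop (𝓝 (Phi t))) :
    Tendsto (fun n : ℕ => (n : ℝ) ^ 2 * phat (m n) (p n) * (1 - phat (m n) (p n)))
      atTop atTop := by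
  by_contra hcon
  -- extract a bound `K` that is violated frequently
  obtain ⟨K0, hK0⟩ : ∃ b : ℝ, ∃ᶠ n : ℕ in atTop,
      ((n:ℕ) : ℝ) ^ 2 * phat (m n) (p n) * (1 - phat (m n) (p n)) < b := by
    rw [tendsto_atTop] at hcon
    push_neg at hcon
    obtain ⟨b, hb⟩ := hcon
    exact ⟨b, (Filter.not_eventually.mp hb).mono fun n hn => not_not.mp hn⟩
  set K : ℝ := max K0 1 with hKdef
  have hK1 : (1:ℝ) ≤ K := le_max_right _ _
  have hfreq : ∃ᶠ n : ℕ in atTop,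
      ((n:ℕ) : ℝ) ^ 2 * phat (m n) (p n) * (1 - phat (m n) (p n)) < K :=
    hK0.mono fun n hn => hn.trans_le (le_max_left _ _)
  set B : ℝ := 2 * K with hBdef
  have hB1 : (1:ℝ) ≤ B := by linarith
  set δ : ℝ := 3 / (4 * (4 * B + 1)) with hδdef
  have hδpos : 0 < δ := by rw [hδdef]; positivity
  set ε : ℝ := min (δ/8) (min (Phi (-1)) (1 - Phi 1)) with hεdef
  have hεpos : 0 < ε := by
    refine lt_min (by positivity) (lt_min (Phi_pos _) (by linarith [Phi_lt_one 1]))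
  set N : ℕ := ⌊12/δ⌋₊ + 1 with hNdef
  have hN1 : 1 ≤ N := Nat.le_add_left 1 _
  have hNpos : (0:ℝ) < N := by exact_mod_cast hN1
  have hNgt : 12/δ < (N:ℝ) := by
    rw [hNdef]; push_cast; exact Nat.lt_floor_add_one _
  have h6N : 6/(N:ℝ) < δ/2 := by
    rw [div_lt_div_iff₀ hNpos (by norm_num : (0:ℝ) < 2)]
    rw [div_lt_iff₀ hδpos] at hNgt
    linarith
  set grid : ℕ → ℝ := fun i => -3 + 6*(i:ℝ)/N with hgriddef
  have hgridmono : ∀ i j : ℕ, i ≤ j → grid i ≤ grid j := by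
    intro i j hij
    rw [hgriddef]
    simp only
    have : (i:ℝ) ≤ (j:ℝ) := by exact_mod_cast hij
    have h1 : 6*(i:ℝ)/N ≤ 6*(j:ℝ)/N := by
      apply (div_le_div_iff_of_pos_right hNpos).mpr
      linarith
    linarith
  have hgridstep : ∀ i : ℕ, grid (i+1) - grid i = 6/(N:ℝ) := by
    intro i
    rw [hgriddef]
    simp only
    push_cast
    field_simp
    ring
  set T : Finset ℝ :=
    insert (-1) (insert 1 ((Finset.range (N+1)).image grid)) with hTdef
  have hev : ∀ᶠ n in atTop, ∀ t ∈ T,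
      |Pr n (m n) (p n) {ω | std n (m n) (p n) (NE n (m n)) ω ≤ t} - Phi t| < ε := by
    rw [Filter.eventually_all_finset]
    intro t ht
    obtain ⟨N₀, hN₀⟩ := Metric.tendsto_atTop.mp (hconv t) ε hεpos
    exact Filter.eventually_atTop.mpr
      ⟨N₀, fun n hn => by simpa [Real.dist_eq] using hN₀ n hn⟩
  obtain ⟨n, hfn, hTn⟩ := (hfreq.and_eventually hev).exists
  -- setup for the fixed `n`
  have hp0 : 0 ≤ p n := (hp n).1.le
  have hp1 : p n ≤ 1 := (hp n).2.le
  set M : ℕ := m n with hMdef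
  set P : ℝ := p n with hPdef
  set ph : ℝ := phat M P with hphdef
  have h0ph : 0 ≤ ph := phat_nonneg hp0 hp1
  have h1ph : ph ≤ 1 := phat_le_one hp0 hp1
  set S : ℝ := ∑ k : Fin n, ∑ l : Fin n, if k < l then (1:ℝ) else 0 with hSdef
  set X : Om n M → ℝ := NE n M with hXdef
  set μ : ℝ := EE n M P X with hμdef
  set σ : ℝ := Real.sqrt (VarE n M P X) with hσdef
  have hσ0 : 0 ≤ σ := Real.sqrt_nonneg _
  have hμS : μ = S * ph := EE_NE
  have hS0 : 0 ≤ S := S_nonneg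
  have hSn : S ≤ (n:ℝ)^2 := S_le_sq
  have hμ0 : 0 ≤ μ := by rw [hμS]; positivity
  have hμSle : μ ≤ S := by
    rw [hμS]; nlinarith
  set F : ℝ → ℝ := fun t => Pr n M P {ω | std n M P X ω ≤ t} with hFdef
  have hT : ∀ t ∈ T, |F t - Phi t| < ε := hTn
  have hε1 : ε ≤ Phi (-1) := le_trans (min_le_right _ _) (min_le_left _ _)
  have hε2 : ε ≤ 1 - Phi 1 := le_trans (min_le_right _ _) (min_le_right _ _)
  have hεδ : ε ≤ δ/8 := min_le_left _ _
  -- Step 1: either μ ≤ B or S - μ ≤ B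
  have hmin : μ ≤ B ∨ S - μ ≤ B := by
    rcases le_or_gt ph (1/2) with h | h
    · left
      have h1 : ph ≤ 2 * (ph * (1 - ph)) := by nlinarith
      have h2 : (n:ℝ)^2 * ph * (1-ph) < K := hfn
      rw [hμS, hBdef]
      nlinarith
    · right
      have h1 : (1 - ph) ≤ 2 * (ph * (1 - ph)) := by nlinarith
      have h2 : (n:ℝ)^2 * ph * (1-ph) < K := hfn
      have h3 : S - μ = S * (1 - ph) := by rw [hμS]; ring
      rw [h3, hBdef]
      nlinarith
  -- helper : contradiction when {std ≤ -1} is empty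
  have hempty_contra : {ω : Om n M | std n M P X ω ≤ -1} = ∅ → False := by
    intro hemp
    have h1 : F (-1) = 0 := by rw [hFdef]; simp only; rw [hemp, Pr_empty]
    have h2 := hT (-1) (by rw [hTdef]; exact Finset.mem_insert_self _ _)
    rw [h1] at h2
    rw [abs_sub_comm, abs_of_nonneg (by linarith [Phi_pos (-1)])] at h2
    simp only [sub_zero] at h2
    linarith [Phi_pos (-1)]
  rcases le_or_gt σ B with hσB | hσB
  · -- σ ≤ B : atom argument (or σ = 0 degenerate case)
    rcases eq_or_lt_of_le hσ0 with hσz | hσpos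
    · -- σ = 0 : std ≡ 0, so {std ≤ -1} = ∅
      refine hempty_contra ?_
      rw [Set.eq_empty_iff_forall_notMem]
      intro ω hω
      have : std n M P X ω = 0 := by
        unfold std
        rw [hσdef] at hσz
        rw [← hσz, div_zero]
      rw [Set.mem_setOf_eq, this] at hω
      linarith
    · -- 0 < σ ≤ B : there is a large atom, contradicting the grid bounds
      obtain ⟨j, hjμ, hjatom⟩ := exists_atom hp0 hp1 hB1 hσpos hσB
      set x : ℝ := (j - μ)/σ with hxdef
      have hx2 : |x| ≤ 2 := by
        rw [hxdef, abs_div, abs_of_pos hσpos, div_le_iff₀ hσpos]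
        linarith [hjμ]
      have habs := abs_le.mp hx2
      -- find grid cell containing x
      set Good : Finset ℕ := (Finset.range (N+1)).filter (fun i => grid i < x) with hGdef
      have hGne : Good.Nonempty := by
        refine ⟨0, ?_⟩
        rw [hGdef, Finset.mem_filter]
        refine ⟨Finset.mem_range.mpr (by omega), ?_⟩
        rw [hgriddef]
        simp only [Nat.cast_zero]
        rw [mul_zero, zero_div, add_zero]
        linarith
      set i : ℕ := Good.max' hGne with hidef
      have hiG : i ∈ Good := Finset.max'_mem _ _
      have hiN : i ≤ N := by
        have := (Finset.mem_filter.mp hiG).1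
        rw [Finset.mem_range] at this; omega
      have higrid : grid i < x := (Finset.mem_filter.mp hiG).2
      have hiNlt : i < N := by
        rcases lt_or_eq_of_le hiN with h | h
        · exact h
        · exfalso
          rw [h] at higrid
          have : grid N = 3 := by
            rw [hgriddef]
            field_simp
            ring
          rw [this] at higrid
          linarith
      have hnext : x ≤ grid (i+1) := by
        by_contra hc
        push_neg at hc
        have h1 : i + 1 ∈ Good := by
          rw [hGdef, Finset.mem_filter, Finset.mem_range]
          exact ⟨by omega, hc⟩
        have := Finset.le_max' Good (i+1) h1
        rw [← hidef] at this
        omega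
      -- the atom is contained in the grid cell
      have hatom_le : Pr n M P {ω | X ω = j} ≤ F (grid (i+1)) - F (grid i) := by
        rw [hFdef]
        refine Pr_diff_le ?_ _ ?_ ?_ hp0 hp1
        · intro ω hω
          rw [Set.mem_setOf_eq] at hω ⊢
          exact hω.trans (hgridmono i (i+1) (by omega))
        · intro ω hω
          rw [Set.mem_setOf_eq] at hω ⊢
          have : std n M P X ω = x := by
            unfold std
            rw [hω, ← hσdef, ← hμdef, hxdef]
          rw [this]
          exact hnext
        · intro ω hω
          rw [Set.mem_setOf_eq] at hω
          have hstd : std n M P X ω = x := by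
            unfold std
            rw [hω, ← hσdef, ← hμdef, hxdef]
          rw [Set.mem_setOf_eq, hstd]
          exact not_le.mpr higrid
      have hmem1 : grid i ∈ T := by
        rw [hTdef]
        refine Finset.mem_insert_of_mem (Finset.mem_insert_of_mem ?_)
        exact Finset.mem_image_of_mem grid (Finset.mem_range.mpr (by omega))
      have hmem2 : grid (i+1) ∈ T := by
        rw [hTdef]
        refine Finset.mem_insert_of_mem (Finset.mem_insert_of_mem ?_)
        exact Finset.mem_image_of_mem grid (Finset.mem_range.mpr (by omega))
      have h1 := hT _ hmem1
      have h2 := hT _ hmem2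
      have h3 := abs_lt.mp h1
      have h4 := abs_lt.mp h2
      have h5 : Phi (grid (i+1)) - Phi (grid i) ≤ grid (i+1) - grid i :=
        Phi_diff_le (hgridmono i (i+1) (by omega))
      have h6 : grid (i+1) - grid i = 6/(N:ℝ) := hgridstep i
      have hδB : δ = 3 / (4 * (4 * B + 1)) := hδdef
      have : δ ≤ Pr n M P {ω | X ω = j} := by rw [hδB]; exact hjatom
      have c2 : F (grid (i+1)) < Phi (grid (i+1)) + ε := by linarith [h4.2]
      have c3 : Phi (grid i) - ε < F (grid i) := by linarith [h3.1]
      have c4 : δ ≤ Phi (grid (i+1)) - Phi (grid i) + 2*ε := by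
        linarith [this, hatom_le, c2, c3]
      have h5' : Phi (grid (i+1)) - Phi (grid i) ≤ 6/(N:ℝ) := by
        rw [← h6]; exact h5
      have c5 : δ ≤ 6/(N:ℝ) + 2*ε := by linarith [c4, h5']
      linarith [c5, h6N, hεδ, hδpos]
  · -- σ > B : degenerate concentration, contradiction at t = ±1
    have hσpos : 0 < σ := lt_of_lt_of_le (by linarith) hσB.le
    rcases hmin with hμB | hSμB
    · -- μ ≤ B < σ : {std ≤ -1} = ∅
      refine hempty_contra ?_
      rw [Set.eq_empty_iff_forall_notMem]
      intro ω hω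
      rw [Set.mem_setOf_eq] at hω
      unfold std at hω
      rw [← hσdef, ← hμdef] at hω
      rw [div_le_iff₀ hσpos] at hω
      have h1 := NE_nonneg (n := n) (m := M) ω
      rw [← hXdef] at h1
      nlinarith
    · -- S - μ ≤ B < σ : {std ≤ 1} = univ
      have huniv : {ω : Om n M | std n M P X ω ≤ 1} = Set.univ := by
        rw [Set.eq_univ_iff_forall]
        intro ω
        rw [Set.mem_setOf_eq]
        unfold std
        rw [← hσdef, ← hμdef, div_le_iff₀ hσpos]
        have h1 := NE_le_S (n := n) (m := M) ω
        rw [← hXdef, ← hSdef] at h1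
        nlinarith
      have h1 : F 1 = 1 := by
        rw [hFdef]; simp only; rw [huniv, Pr_univ]
      have h2 := hT 1 (by
        rw [hTdef]
        exact Finset.mem_insert_of_mem (Finset.mem_insert_self _ _))
      rw [h1] at h2
      rw [abs_of_nonneg (by linarith [Phi_lt_one 1])] at h2
      linarith

end

end RIG
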